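/- arXiv:1906.03407 — 5 statements merged into one kernel-verified Lean document; each statement's English description precedes it below -/
import Mathlib

section
/- Suppose m : ℝ → ℝ is even, continuously differentiable, satisfies |m'(ξ)| ≤ C(1+|ξ|)^{m₀-1} for some m₀ ∈ (-1,0), and c - m(ξ) ≥ ε > 0 for all ξ. Then for H_c(x) = (2π)^{-1/2} ∫ (m(ξ)/(c-m(ξ))) e^{ixξ} dξ (interpreted via the derivative as in the paper), one has |x·H_c(x)| ≤ K·|x|^{-m₀} for all x > 0, where K depends only on C, ε, c, m₀; consequently |H_c(x)| ≲ |x|^{-1-m₀} for small x. -/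
/-!
The kernel `g = c m' / (c - m)²` is bounded by `B (1 + |ξ|) ^ (m₀ - 1)`, so no cancellation in the
sine integral is needed: bound `|sin (x ξ)|` by `x |ξ|` for `|ξ| ≤ 1 / x` and by `1` beyond. The
two pieces `∫₀^{1/x} x ξ ^ m₀` and `∫_{1/x}^∞ ξ ^ (m₀ - 1)` are finite because `m₀ > -1`,
resp. `m₀ < 0`, and both equal a constant times `x ^ (-m₀)`. Dividing by `x` gives the bound on `H`.
-/

open MeasureTheory Real Set

lemma abs_mul_div_sq_le {a b c d ε : ℝ} (ha : |a| ≤ b) (hε : 0 < ε) (hd : ε ≤ d) :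
    |c * a / d ^ 2| ≤ |c| * b / ε ^ 2 := by
  have hd₀ : 0 < d := hε.trans_le hd
  have hb : 0 ≤ b := (abs_nonneg a).trans ha
  rw [abs_div, abs_mul, abs_of_pos (by positivity : 0 < d ^ 2)]
  gcongr

lemma abs_sin_mul_abs (x ξ : ℝ) : |sin (x * |ξ|)| = |sin (x * ξ)| := by
  rcases abs_choice ξ with h | h <;> simp [h, sin_neg]

lemma integrable_one_add_abs_rpow_mul_abs_sin {s : ℝ} (hs : s < -1) (x : ℝ) :
    Integrable fun ξ : ℝ => (1 + |ξ|) ^ s * |sin (x * ξ)| := by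
  have hdom : Integrable fun ξ : ℝ => (1 + |ξ|) ^ s := by
    simpa [Real.norm_eq_abs] using
      integrable_one_add_norm (E := ℝ) (μ := volume) (r := -s) (by simp; linarith)
  refine hdom.mono' (by fun_prop) (ae_of_all _ fun ξ => ?_)
  rw [norm_mul, norm_of_nonneg (by positivity), norm_abs_eq_norm, Real.norm_eq_abs]
  exact mul_le_of_le_one_right (by positivity) (abs_sin_le_one _)

lemma integral_Ioc_zero_inv_rpow {s x : ℝ} (hs : -1 < s) (hx : 0 < x) :
    ∫ t in Ioc 0 x⁻¹, t ^ s = x ^ (-(s + 1)) / (s + 1) := by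
  rw [← intervalIntegral.integral_of_le (by positivity), integral_rpow (Or.inl hs),
    zero_rpow (by linarith), sub_zero, inv_rpow hx.le, rpow_neg hx.le]

lemma integral_Ioi_inv_rpow {s x : ℝ} (hs : s < -1) (hx : 0 < x) :
    ∫ t in Ioi x⁻¹, t ^ s = x ^ (-(s + 1)) / -(s + 1) := by
  rw [integral_Ioi_rpow_of_lt hs (by positivity), inv_rpow hx.le, rpow_neg hx.le, neg_div,
    div_neg]

lemma setIntegral_Ioi_one_add_rpow_mul_abs_sin_le {m₀ x : ℝ} (hm₀ : m₀ ∈ Ioo (-1) 0)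
    (hx : 0 < x) :
    ∫ t in Ioi 0, (1 + t) ^ (m₀ - 1) * |sin (x * t)| ≤ (1 / (m₀ + 1) + 1 / -m₀) * x ^ (-m₀) := by
  obtain ⟨hm₁, hm₂⟩ := hm₀
  set f : ℝ → ℝ := fun t => (1 + t) ^ (m₀ - 1) * |sin (x * t)|
  have hf : IntegrableOn f (Ioi 0) :=
    (integrable_one_add_abs_rpow_mul_abs_sin (s := m₀ - 1) (by linarith) x).integrableOn.congr_fun
      (fun t ht => by simp only [f, abs_of_pos (mem_Ioi.mp ht)]) measurableSet_Ioi
  have hshift : ∀ t : ℝ, 0 < t → (1 + t) ^ (m₀ - 1) ≤ t ^ (m₀ - 1) := fun t ht =>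
    rpow_le_rpow_of_nonpos ht (by linarith) (by linarith)
  have hnear : ∀ t ∈ Ioc 0 x⁻¹, f t ≤ x * t ^ m₀ := by
    rintro t ⟨ht, -⟩
    have hsin : |sin (x * t)| ≤ x * t := (abs_sin_le_abs).trans_eq (abs_of_pos (by positivity))
    calc f t ≤ t ^ (m₀ - 1) * (x * t) :=
          mul_le_mul (hshift t ht) hsin (abs_nonneg _) (by positivity)
      _ = x * t ^ m₀ := by rw [rpow_sub_one ht.ne']; field_simp
  have hfar : ∀ t ∈ Ioi x⁻¹, f t ≤ t ^ (m₀ - 1) := fun t ht => by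
    have ht : 0 < t := (inv_pos.mpr hx).trans ht
    exact mul_le_of_le_one_right (by positivity) (abs_sin_le_one _) |>.trans (hshift t ht)
  rw [← Ioc_union_Ioi_eq_Ioi (inv_pos.mpr hx).le,
    setIntegral_union (Ioc_disjoint_Ioi le_rfl) measurableSet_Ioi (hf.mono_set Ioc_subset_Ioi_self)
      (hf.mono_set (Ioi_subset_Ioi (inv_pos.mpr hx).le))]
  calc (∫ t in Ioc 0 x⁻¹, f t) + ∫ t in Ioi x⁻¹, f t
      ≤ (∫ t in Ioc 0 x⁻¹, x * t ^ m₀) + ∫ t in Ioi x⁻¹, t ^ (m₀ - 1) := by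
        refine add_le_add ?_ ?_
        · exact setIntegral_mono_on (hf.mono_set Ioc_subset_Ioi_self)
            ((intervalIntegral.intervalIntegrable_rpow' hm₁).1.const_mul x) measurableSet_Ioc hnear
        · exact setIntegral_mono_on (hf.mono_set (Ioi_subset_Ioi (inv_pos.mpr hx).le))
            (integrableOn_Ioi_rpow_of_lt (by linarith) (inv_pos.mpr hx)) measurableSet_Ioi hfar
    _ = (1 / (m₀ + 1) + 1 / -m₀) * x ^ (-m₀) := by
        rw [integral_const_mul, integral_Ioc_zero_inv_rpow hm₁ hx,
          integral_Ioi_inv_rpow (by linarith) hx, sub_add_cancel, neg_add, rpow_add hx, rpow_neg_one]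
        field_simp

lemma abs_integral_mul_sin_le {g : ℝ → ℝ} {B m₀ x : ℝ} (hm₀ : m₀ ∈ Ioo (-1) 0) (hx : 0 < x)
    (hg : ∀ ξ, |g ξ| ≤ B * (1 + |ξ|) ^ (m₀ - 1)) :
    |∫ ξ, g ξ * sin (x * ξ)| ≤ 2 * B * (1 / (m₀ + 1) + 1 / -m₀) * x ^ (-m₀) := by
  have hB : 0 ≤ B := by simpa using (abs_nonneg _).trans (hg 0)
  set f : ℝ → ℝ := fun t => (1 + t) ^ (m₀ - 1) * |sin (x * t)|
  have hfg : ∀ ξ, ‖g ξ * sin (x * ξ)‖ ≤ B * f |ξ| := fun ξ => by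
    simp only [f, abs_sin_mul_abs]
    rw [Real.norm_eq_abs, abs_mul, ← mul_assoc]
    exact mul_le_mul_of_nonneg_right (hg ξ) (abs_nonneg _)
  calc |∫ ξ, g ξ * sin (x * ξ)| ≤ ∫ ξ, B * f |ξ| :=
        norm_integral_le_of_norm_le
          (((integrable_one_add_abs_rpow_mul_abs_sin (s := m₀ - 1) (by linarith [hm₀.2]) x).congr
            (ae_of_all _ fun ξ => by simp only [f, abs_sin_mul_abs])).const_mul B)
          (ae_of_all _ hfg)
    _ = 2 * B * ∫ t in Ioi 0, f t := by rw [integral_const_mul, integral_comp_abs (f := f)]; ring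
    _ ≤ 2 * B * ((1 / (m₀ + 1) + 1 / -m₀) * x ^ (-m₀)) :=
        mul_le_mul_of_nonneg_left (setIntegral_Ioi_one_add_rpow_mul_abs_sin_le hm₀ hx) (by positivity)
    _ = 2 * B * (1 / (m₀ + 1) + 1 / -m₀) * x ^ (-m₀) := by ring

theorem stmt1_general (m H : ℝ → ℝ) (C m₀ c ε : ℝ) (hC : 0 < C) (hε : 0 < ε)
    (hm₀ : m₀ ∈ Set.Ioo (-1 : ℝ) 0)
    (hbound : ∀ ξ : ℝ, |deriv m ξ| ≤ C * (1 + |ξ|) ^ (m₀ - 1))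
    (hc : ∀ ξ, ε ≤ c - m ξ)
    (hH : ∀ x : ℝ, 0 < x →
      x * H x = -(Real.sqrt (2 * Real.pi))⁻¹ *
        ∫ ξ : ℝ, (c * deriv m ξ / (c - m ξ) ^ 2) * Real.sin (x * ξ)) :
    ∃ K > 0, (∀ x : ℝ, 0 < x → |x * H x| ≤ K * x ^ (-m₀)) ∧
      ∀ x : ℝ, 0 < x → x < 1 → |H x| ≤ K * x ^ (-1 - m₀) := by
  set B := |c| * C / ε ^ 2
  set A := (√(2 * π))⁻¹ * (2 * B * (1 / (m₀ + 1) + 1 / -m₀))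
  have hA : 0 ≤ A := by
    have : 0 < 1 / (m₀ + 1) + 1 / -m₀ :=
      add_pos (one_div_pos.2 (by linarith [hm₀.1])) (one_div_pos.2 (by linarith [hm₀.2]))
    positivity
  have hxH : ∀ x : ℝ, 0 < x → |x * H x| ≤ A * x ^ (-m₀) := fun x hx => by
    have hg : ∀ ξ, |c * deriv m ξ / (c - m ξ) ^ 2| ≤ B * (1 + |ξ|) ^ (m₀ - 1) := fun ξ =>
      (abs_mul_div_sq_le (hbound ξ) hε (hc ξ)).trans_eq (by ring)
    rw [hH x hx, abs_mul, abs_neg, abs_inv, abs_of_pos (by positivity)]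
    exact (mul_le_mul_of_nonneg_left (abs_integral_mul_sin_le hm₀ hx hg) (by positivity)).trans_eq
      (by simp only [A]; ring)
  have hK : ∀ x : ℝ, 0 < x → |x * H x| ≤ (A + 1) * x ^ (-m₀) := fun x hx =>
    (hxH x hx).trans (mul_le_mul_of_nonneg_right (by linarith) (by positivity))
  -- `A` vanishes when `c = 0`, hence the `+ 1`.
  refine ⟨A + 1, by linarith, hK, fun x hx _ => ?_⟩
  have hxK := hK x hx
  rw [abs_mul, abs_of_pos hx] at hxK
  rw [sub_eq_neg_add, rpow_add hx, rpow_neg_one, ← mul_assoc, le_mul_inv_iff₀ hx]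
  linarith

theorem stmt1 (m H : ℝ → ℝ) (C m₀ c ε : ℝ) (hC : 0 < C) (hε : 0 < ε)
    (hm₀ : m₀ ∈ Set.Ioo (-1 : ℝ) 0)
    (heven : ∀ ξ, m (-ξ) = m ξ) (hdiff : ContDiff ℝ 1 m)
    (hbound : ∀ ξ : ℝ, |deriv m ξ| ≤ C * (1 + |ξ|) ^ (m₀ - 1))
    (hc : ∀ ξ, ε ≤ c - m ξ)
    (hH : ∀ x : ℝ, 0 < x →
      x * H x = -(Real.sqrt (2 * Real.pi))⁻¹ *
        ∫ ξ : ℝ, (c * deriv m ξ / (c - m ξ) ^ 2) * Real.sin (x * ξ)) :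
    ∃ K > 0, (∀ x : ℝ, 0 < x → |x * H x| ≤ K * x ^ (-m₀)) ∧
      ∀ x : ℝ, 0 < x → x < 1 → |H x| ≤ K * x ^ (-1 - m₀) :=
  stmt1_general m H C m₀ c ε hC hε hm₀ hbound hc hH
end

section
/- Let m : ℝ → ℝ be smooth with |m^{(n)}(x)| ≤ Cₙ(1+|x|)^{m₀-n} for all n ≥ 1, where m₀ < 0 and ∑ₙ C_{n+1} tⁿ/n! converges for |t| ≤ y₀. Then for every fixed y with |y| ≤ y₀ and all real x with |x| ≥ |y|·k (so that |y|/(1+|x|) ≤ y₀/(1+|x|) keeps the series convergent), the analytic extension satisfies |m'(x + iy)| ≤ K(1+|x|)^{m₀-1} for a constant K independent of x. -/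
theorem stmt7 (m : ℝ → ℝ) (C : ℕ → ℝ) (m₀ y₀ k : ℝ) (hm : ContDiff ℝ (⊤ : ℕ∞) m)
    (hm₀ : m₀ < 0) (hy₀ : 0 < y₀)
    (hbound : ∀ n : ℕ, 1 ≤ n → ∀ x : ℝ, |iteratedDeriv n m x| ≤ C n * (1 + |x|) ^ (m₀ - n))
    (hconv : ∀ t : ℝ, |t| ≤ y₀ → Summable (fun n : ℕ => C (n + 1) * t ^ n / (Nat.factorial n : ℝ))) :
    ∀ y : ℝ, |y| ≤ y₀ → ∃ K : ℝ, ∀ x : ℝ, |y| * k ≤ |x| →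
      ‖∑' n : ℕ, ((iteratedDeriv (n + 1) m x : ℝ) : ℂ) * (Complex.I * y) ^ n / (Nat.factorial n : ℂ)‖ ≤
        K * (1 + |x|) ^ (m₀ - 1) := by
  intro y hy
  have hsumC : Summable (fun n : ℕ => C (n + 1) * |y| ^ n / (Nat.factorial n : ℝ)) :=
    hconv |y| (by rwa [abs_abs])
  refine ⟨∑' n : ℕ, C (n + 1) * |y| ^ n / (Nat.factorial n : ℝ), ?_⟩
  intro x _
  have h1x : (1 : ℝ) ≤ 1 + |x| := le_add_of_nonneg_right (abs_nonneg x)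
  have hC : ∀ n : ℕ, 0 ≤ C (n + 1) := by
    intro n
    have h := hbound (n + 1) (by omega) 0
    simp [Real.one_rpow] at h
    exact le_trans (abs_nonneg _) h
  have hnorm : ∀ n : ℕ,
      ‖((iteratedDeriv (n + 1) m x : ℝ) : ℂ) * (Complex.I * y) ^ n / (Nat.factorial n : ℂ)‖
        = |iteratedDeriv (n + 1) m x| * |y| ^ n / (Nat.factorial n : ℝ) := by
    intro n
    simp [map_div₀, map_mul, map_pow, Complex.norm_I,
      Complex.norm_real, Complex.norm_natCast]
  have hterm : ∀ n : ℕ,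
      ‖((iteratedDeriv (n + 1) m x : ℝ) : ℂ) * (Complex.I * y) ^ n / (Nat.factorial n : ℂ)‖
        ≤ C (n + 1) * |y| ^ n / (Nat.factorial n : ℝ) * (1 + |x|) ^ (m₀ - 1) := by
    intro n
    rw [hnorm n]
    have hd := hbound (n + 1) (by omega) x
    have hfac : (0 : ℝ) < (Nat.factorial n : ℝ) := by positivity
    have hexp : (1 + |x|) ^ (m₀ - ((n : ℝ) + 1)) ≤ (1 + |x|) ^ (m₀ - 1) := by
      apply Real.rpow_le_rpow_of_exponent_le h1x
      have : (0 : ℝ) ≤ (n : ℝ) := Nat.cast_nonneg n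
      linarith
    calc |iteratedDeriv (n + 1) m x| * |y| ^ n / (Nat.factorial n : ℝ)
        ≤ C (n + 1) * (1 + |x|) ^ (m₀ - ((n : ℝ) + 1)) * |y| ^ n / (Nat.factorial n : ℝ) := by
          have hd' : |iteratedDeriv (n + 1) m x|
              ≤ C (n + 1) * (1 + |x|) ^ (m₀ - ((n : ℝ) + 1)) := by
            convert hd using 3
            push_cast
            ring
          gcongr
      _ = C (n + 1) * |y| ^ n / (Nat.factorial n : ℝ) * (1 + |x|) ^ (m₀ - ((n : ℝ) + 1)) := by
          ring
      _ ≤ C (n + 1) * |y| ^ n / (Nat.factorial n : ℝ) * (1 + |x|) ^ (m₀ - 1) := by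
          gcongr
          exact div_nonneg (mul_nonneg (hC n) (pow_nonneg (abs_nonneg y) n)) hfac.le
  have hg : Summable (fun n : ℕ =>
      C (n + 1) * |y| ^ n / (Nat.factorial n : ℝ) * (1 + |x|) ^ (m₀ - 1)) :=
    hsumC.mul_right _
  have hsumnorm : Summable (fun n : ℕ =>
      ‖((iteratedDeriv (n + 1) m x : ℝ) : ℂ) * (Complex.I * y) ^ n / (Nat.factorial n : ℂ)‖) :=
    Summable.of_nonneg_of_le (fun n => norm_nonneg _) hterm hg
  calc ‖∑' n : ℕ, ((iteratedDeriv (n + 1) m x : ℝ) : ℂ) * (Complex.I * y) ^ n / (Nat.factorial n : ℂ)‖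
      ≤ ∑' n : ℕ, ‖((iteratedDeriv (n + 1) m x : ℝ) : ℂ) * (Complex.I * y) ^ n / (Nat.factorial n : ℂ)‖ :=
        norm_tsum_le_tsum_norm hsumnorm
    _ ≤ ∑' n : ℕ, C (n + 1) * |y| ^ n / (Nat.factorial n : ℝ) * (1 + |x|) ^ (m₀ - 1) :=
        Summable.tsum_le_tsum hterm hsumnorm hg
    _ = (∑' n : ℕ, C (n + 1) * |y| ^ n / (Nat.factorial n : ℝ)) * (1 + |x|) ^ (m₀ - 1) :=
        tsum_mul_right
end

section
/- Let H ∈ L¹(ℝ) be nonnegative, even, and strictly decreasing on (0,∞), let λ ∈ ℝ, and let f ∈ L¹ ∩ L^∞(ℝ) satisfy f(2λ - y) = -f(y) for a.e. y (f is odd about λ) and f(y) ≥ 0 for a.e. y ≥ λ. Then (H * f)(x) = ∫_{λ}^{∞} (H(x-y) - H(x+y-2λ)) f(y) dy ≥ 0 for all x ≥ λ. -/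
/-!
Reflecting `y ↦ 2λ - y` and using that `f` is odd about `λ` folds the integral over `y < λ`
onto `y > λ`, which produces the kernel `H (x - y) - H (x + y - 2λ)`. For `x, y ≥ λ` we have
`|x - y| ≤ x + y - 2λ`, so evenness and monotonicity of `H` make this kernel nonnegative
(away from the null set `y = x`, where `|x - y| = 0` lies outside `(0, ∞)`).
-/

open MeasureTheory Set

theorem Function.Even.le_of_abs_le {H : ℝ → ℝ} (heven : Function.Even H)
    (hanti : AntitoneOn H (Ioi 0)) {a b : ℝ} (ha : a ≠ 0) (hab : |a| ≤ b) : H b ≤ H a := by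
  have habs : H |a| = H a := by
    rcases abs_choice a with h | h <;> rw [h]
    exact heven a
  rw [← habs]
  exact hanti (abs_pos.2 ha) (lt_of_lt_of_le (abs_pos.2 ha) hab) hab

theorem setIntegral_Iio_eq_setIntegral_Ioi_reflect {E : Type*} [NormedAddCommGroup E]
    [NormedSpace ℝ E] (g : ℝ → E) (c : ℝ) :
    ∫ y in Iio c, g y = ∫ y in Ioi c, g (2 * c - y) := by
  have hind : ∀ y,
      (Iio c).indicator g (2 * c - y) = (Ioi c).indicator (fun z => g (2 * c - z)) y := by
    intro y
    by_cases h : c < y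
    · rw [indicator_of_mem (by rw [mem_Iio]; linarith), indicator_of_mem (mem_Ioi.2 h)]
    · rw [indicator_of_notMem (by rw [mem_Iio]; linarith),
        indicator_of_notMem (show y ∉ Ioi c from h)]
  rw [← integral_indicator measurableSet_Iio, ← integral_sub_left_eq_self _ volume (2 * c),
    ← integral_indicator measurableSet_Ioi]
  simp only [hind]

theorem integral_mul_eq_setIntegral_Ioi_of_odd {K f : ℝ → ℝ} {c : ℝ}
    (hKf : Integrable fun y => K y * f y) (hodd : ∀ᵐ y, f (2 * c - y) = -f y) :
    ∫ y, K y * f y = ∫ y in Ioi c, (K y - K (2 * c - y)) * f y := by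
  have hreflect : (fun y => K (2 * c - y) * f (2 * c - y)) =ᵐ[volume]
      fun y => -(K (2 * c - y) * f y) := by
    filter_upwards [hodd] with y hy
    rw [hy, mul_neg]
  have hKf' : Integrable fun y => K (2 * c - y) * f y := by
    simpa using ((hKf.comp_sub_left (2 * c)).congr hreflect).neg
  calc ∫ y, K y * f y
      = (∫ y in Iio c, K y * f y) + ∫ y in Ioi c, K y * f y := by
        rw [← integral_Iic_eq_integral_Iio,
          intervalIntegral.integral_Iic_add_Ioi hKf.integrableOn hKf.integrableOn]
    _ = -(∫ y in Ioi c, K (2 * c - y) * f y) + ∫ y in Ioi c, K y * f y := by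
        rw [setIntegral_Iio_eq_setIntegral_Ioi_reflect, setIntegral_congr_ae measurableSet_Ioi
          (hreflect.mono fun y hy _ => hy), integral_neg]
    _ = ∫ y in Ioi c, (K y - K (2 * c - y)) * f y := by
        rw [neg_add_eq_sub, ← integral_sub hKf.integrableOn hKf'.integrableOn]
        simp only [sub_mul]

theorem stmt8_general (H f : ℝ → ℝ) (lam : ℝ)
    (hH : MeasureTheory.Integrable H)
    (hHeven : ∀ x, H (-x) = H x) (hHanti : StrictAntiOn H (Set.Ioi 0))
    (hf1 : MeasureTheory.Integrable f) (hfB : ∃ B, ∀ y, |f y| ≤ B)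
    (hodd : ∀ᵐ y : ℝ ∂MeasureTheory.volume, f (2 * lam - y) = -f y)
    (hfpos : ∀ᵐ y : ℝ ∂MeasureTheory.volume, lam ≤ y → 0 ≤ f y) :
    ∀ x : ℝ, lam ≤ x →
      ((∫ y : ℝ, H (x - y) * f y) =
        ∫ y in Set.Ioi lam, (H (x - y) - H (x + y - 2 * lam)) * f y) ∧
      0 ≤ ∫ y : ℝ, H (x - y) * f y := by
  intro x hx
  obtain ⟨B, hB⟩ := hfB
  have hKf : Integrable fun y => H (x - y) * f y :=
    (hH.comp_sub_left x).mul_bdd hf1.aestronglyMeasurable (.of_forall hB)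
  have hfold : (∫ y, H (x - y) * f y) =
      ∫ y in Ioi lam, (H (x - y) - H (x + y - 2 * lam)) * f y := by
    rw [integral_mul_eq_setIntegral_Ioi_of_odd hKf hodd]
    simp only [sub_sub_eq_add_sub, add_comm x]
  refine ⟨hfold, hfold ▸ setIntegral_nonneg_ae measurableSet_Ioi ?_⟩
  filter_upwards [hfpos, Measure.ae_ne volume x] with y hfy hyx hyIoi
  have hy : lam < y := hyIoi
  have hH_le : H (x + y - 2 * lam) ≤ H (x - y) :=
    Function.Even.le_of_abs_le hHeven hHanti.antitoneOn (sub_ne_zero.2 (Ne.symm hyx))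
      (abs_le.2 ⟨by linarith, by linarith⟩)
  exact mul_nonneg (sub_nonneg.2 hH_le) (hfy hy.le)

theorem stmt8 (H f : ℝ → ℝ) (lam : ℝ)
    (hH : MeasureTheory.Integrable H) (hHpos : ∀ x, 0 ≤ H x)
    (hHeven : ∀ x, H (-x) = H x) (hHanti : StrictAntiOn H (Set.Ioi 0))
    (hf1 : MeasureTheory.Integrable f) (hfB : ∃ B, ∀ y, |f y| ≤ B)
    (hodd : ∀ᵐ y : ℝ ∂MeasureTheory.volume, f (2 * lam - y) = -f y)
    (hfpos : ∀ᵐ y : ℝ ∂MeasureTheory.volume, lam ≤ y → 0 ≤ f y) :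
    ∀ x : ℝ, lam ≤ x →
      ((∫ y : ℝ, H (x - y) * f y) =
        ∫ y in Set.Ioi lam, (H (x - y) - H (x + y - 2 * lam)) * f y) ∧
      0 ≤ ∫ y : ℝ, H (x - y) * f y :=
  stmt8_general H f lam hH hHeven hHanti hf1 hfB hodd hfpos
end

section
/- Suppose u ∈ L¹ ∩ L^∞(ℝ), H ∈ L¹_loc with e^{a|·|} H ∈ L¹(ℝ) for some a > 0, r > 1, and |u(x)| ≤ M ∫ |H(x-y)| |u(y)|^r dy for a.e. x. If e^{ν|·|} u ∈ L¹ ∩ L^∞(ℝ) for some ν > 0 with rν ≤ a, then e^{rν|·|} u ∈ L¹ ∩ L^∞(ℝ). -/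
/-!
Put `w := e^{ν|·|} |u|` and `K := e^{rν|·|} |H|`. Since `rν ≥ 0`, the weight is submultiplicative,
`e^{rν|x|} ≤ e^{rν|x-y|} e^{rν|y|}`, so the hypothesis gives `e^{rν|x|} |u x| ≤ M (w^r ∗ K)(x)`.
Here `w ∈ L¹ ∩ L^∞` gives `w^r ∈ L¹ ∩ L^∞` (as `r ≥ 1`), and `K ≤ e^{a|·|} |H|` is integrable
(as `rν ≤ a`), so Young's inequalities `L¹ ∗ L¹ ⊆ L¹` and `L^∞ ∗ L¹ ⊆ L^∞` conclude.
-/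

open MeasureTheory Real

section Young

variable {G : Type*} [AddGroup G] [MeasurableSpace G] {μ : Measure G}

theorem integrable_integral_mul_sub [MeasurableAdd₂ G] [MeasurableNeg G] [SFinite μ]
    [μ.IsAddRightInvariant] {f K : G → ℝ} (hf : Integrable f μ) (hK : Integrable K μ) :
    Integrable (fun x => ∫ y, f y * K (x - y) ∂μ) μ := by
  convert hf.integrable_convolution (ContinuousLinearMap.mul ℝ ℝ) hK using 1
  ext x
  simp [convolution_def]

theorem norm_integral_mul_sub_le [MeasurableAdd G] [MeasurableNeg G] [μ.IsAddLeftInvariant]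
    [μ.IsNegInvariant] {f K : G → ℝ} {B : ℝ} (hfB : ∀ y, ‖f y‖ ≤ B) (hK : Integrable K μ)
    (x : G) : ‖∫ y, f y * K (x - y) ∂μ‖ ≤ B * ∫ y, ‖K y‖ ∂μ := by
  calc ‖∫ y, f y * K (x - y) ∂μ‖ ≤ ∫ y, B * ‖K (x - y)‖ ∂μ := by
        refine norm_integral_le_of_norm_le ((hK.comp_sub_left x).norm.const_mul B) ?_
        filter_upwards with y
        rw [norm_mul]
        exact mul_le_mul_of_nonneg_right (hfB y) (norm_nonneg _)
    _ = B * ∫ y, ‖K y‖ ∂μ := by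
        rw [integral_const_mul, integral_sub_left_eq_self (fun y => ‖K y‖) μ x]

theorem integrable_and_ae_bdd_of_le_integral_mul_sub [MeasurableAdd₂ G] [MeasurableNeg G]
    [SFinite μ] [μ.IsAddRightInvariant] [μ.IsAddLeftInvariant] [μ.IsNegInvariant]
    {g f K : G → ℝ} {M B : ℝ} (hg : AEStronglyMeasurable g μ) (hf : Integrable f μ)
    (hfB : ∀ y, ‖f y‖ ≤ B) (hK : Integrable K μ)
    (hle : ∀ᵐ x ∂μ, ‖g x‖ ≤ M * ∫ y, f y * K (x - y) ∂μ) :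
    Integrable g μ ∧ ∃ C, ∀ᵐ x ∂μ, ‖g x‖ ≤ C := by
  refine ⟨((integrable_integral_mul_sub hf hK).const_mul M).mono' hg hle,
    |M| * (B * ∫ y, ‖K y‖ ∂μ), ?_⟩
  filter_upwards [hle] with x hx
  calc ‖g x‖ ≤ |M * ∫ y, f y * K (x - y) ∂μ| := hx.trans (le_abs_self _)
    _ ≤ |M| * (B * ∫ y, ‖K y‖ ∂μ) := by
        rw [abs_mul]
        exact mul_le_mul_of_nonneg_left (norm_integral_mul_sub_le hfB hK x) (abs_nonneg M)

end Young

theorem integrable_rpow_of_le {α : Type*} [MeasurableSpace α] {μ : Measure α} {w : α → ℝ}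
    {B r : ℝ} (hw : Integrable w μ) (hw0 : ∀ x, 0 ≤ w x) (hwB : ∀ x, w x ≤ B) (hr : 1 ≤ r) :
    Integrable (fun x => w x ^ r) μ := by
  refine (hw.const_mul (B ^ (r - 1))).mono' (hw.aemeasurable.pow_const r).aestronglyMeasurable ?_
  filter_upwards with x
  have hsplit : w x ^ r = w x ^ (r - 1) * w x := by
    rw [← rpow_add_one' (hw0 x) (by linarith), sub_add_cancel]
  rw [norm_of_nonneg (rpow_nonneg (hw0 x) r), hsplit]
  exact mul_le_mul_of_nonneg_right (rpow_le_rpow (hw0 x) (hwB x) (by linarith)) (hw0 x)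

theorem MeasureTheory.Integrable.exp_mul_abs_mul_of_le {μ : Measure ℝ} {g : ℝ → ℝ} {a b : ℝ}
    (hg : Integrable (fun x => exp (a * |x|) * g x) μ) (hba : b ≤ a) :
    Integrable (fun x => exp (b * |x|) * g x) μ := by
  have hfactor : (fun x => exp (b * |x|) * g x) =
      fun x => exp ((b - a) * |x|) * (exp (a * |x|) * g x) := by
    ext x
    rw [← mul_assoc, ← exp_add, ← add_mul, sub_add_cancel]
  rw [hfactor]
  refine hg.bdd_mul (c := 1) (by fun_prop) (.of_forall fun x => ?_)
  rw [norm_of_nonneg (exp_pos _).le, exp_le_one_iff]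
  exact mul_nonpos_of_nonpos_of_nonneg (by linarith) (abs_nonneg x)

theorem exp_mul_abs_le_mul_exp {c : ℝ} (hc : 0 ≤ c) (x y : ℝ) :
    exp (c * |x|) ≤ exp (c * |x - y|) * exp (c * |y|) := by
  rw [← exp_add, ← mul_add]
  gcongr
  simpa using abs_add_le (x - y) y

theorem ae_exp_mul_abs_le_integral {μ : Measure ℝ} {u H : ℝ → ℝ} {M ν r : ℝ} (hM : 0 ≤ M)
    (hrν : 0 ≤ r * ν)
    (hint : ∀ x, Integrable
      (fun y => (exp (ν * |y|) * |u y|) ^ r * (exp (r * ν * |x - y|) * |H (x - y)|)) μ)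
    (hineq : ∀ᵐ x ∂μ, |u x| ≤ M * ∫ y, |H (x - y)| * |u y| ^ r ∂μ) :
    ∀ᵐ x ∂μ, exp (r * ν * |x|) * |u x| ≤
      M * ∫ y, (exp (ν * |y|) * |u y|) ^ r * (exp (r * ν * |x - y|) * |H (x - y)|) ∂μ := by
  filter_upwards [hineq] with x hx
  have hweight : ∀ y, exp (r * ν * |x|) * (|H (x - y)| * |u y| ^ r) ≤
      (exp (ν * |y|) * |u y|) ^ r * (exp (r * ν * |x - y|) * |H (x - y)|) := by
    intro y
    rw [mul_rpow (exp_pos _).le (abs_nonneg _), ← exp_mul,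
      show ν * |y| * r = r * ν * |y| by ring]
    calc exp (r * ν * |x|) * (|H (x - y)| * |u y| ^ r)
        ≤ exp (r * ν * |x - y|) * exp (r * ν * |y|) * (|H (x - y)| * |u y| ^ r) := by
          gcongr
          exact exp_mul_abs_le_mul_exp hrν x y
      _ = exp (r * ν * |y|) * |u y| ^ r * (exp (r * ν * |x - y|) * |H (x - y)|) := by
          ring
  calc exp (r * ν * |x|) * |u x|
      ≤ exp (r * ν * |x|) * (M * ∫ y, |H (x - y)| * |u y| ^ r ∂μ) := by gcongr
    _ = M * ∫ y, exp (r * ν * |x|) * (|H (x - y)| * |u y| ^ r) ∂μ := by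
        rw [integral_const_mul]; ring
    _ ≤ _ := mul_le_mul_of_nonneg_left
        (integral_mono_of_nonneg (.of_forall fun y => by positivity) (hint x)
          (.of_forall hweight)) hM

theorem stmt13_general (u H : ℝ → ℝ) (M a ν r : ℝ) (hM : 0 < M) (hr : 1 < r)
    (hu1 : MeasureTheory.Integrable u)
    (hH : MeasureTheory.Integrable (fun x => Real.exp (a * |x|) * |H x|))
    (hineq : ∀ᵐ x : ℝ ∂MeasureTheory.volume,
      |u x| ≤ M * ∫ y : ℝ, |H (x - y)| * |u y| ^ r)
    (hν : 0 < ν) (hrν : r * ν ≤ a)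
    (huν1 : MeasureTheory.Integrable (fun x => Real.exp (ν * |x|) * u x))
    (huνB : ∃ B, ∀ x, Real.exp (ν * |x|) * |u x| ≤ B) :
    MeasureTheory.Integrable (fun x => Real.exp (r * ν * |x|) * u x) ∧
    ∃ B, ∀ᵐ x : ℝ ∂MeasureTheory.volume, Real.exp (r * ν * |x|) * |u x| ≤ B := by
  obtain ⟨B, hB⟩ := huνB
  have hw : Integrable (fun y => exp (ν * |y|) * |u y|) := by
    simpa [abs_mul] using huν1.abs
  have hf := integrable_rpow_of_le hw (fun y => by positivity) hB hr.le
  have hfB : ∀ y, ‖(exp (ν * |y|) * |u y|) ^ r‖ ≤ B ^ r := fun y => by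
    rw [norm_of_nonneg (by positivity)]
    exact rpow_le_rpow (by positivity) (hB y) (by linarith)
  have hK := hH.exp_mul_abs_mul_of_le hrν
  have hle := ae_exp_mul_abs_le_integral hM.le (by positivity)
    (fun x => (hK.comp_sub_left x).bdd_mul hf.aestronglyMeasurable (.of_forall hfB)) hineq
  have hnorm : ∀ x, ‖exp (r * ν * |x|) * u x‖ = exp (r * ν * |x|) * |u x| := fun x => by
    rw [norm_mul, norm_of_nonneg (exp_pos _).le, norm_eq_abs]
  have hgm : AEStronglyMeasurable (fun x => exp (r * ν * |x|) * u x) :=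
    (by fun_prop : Continuous fun x => exp (r * ν * |x|)).aestronglyMeasurable.mul
      hu1.aestronglyMeasurable
  obtain ⟨hint, C, hC⟩ := integrable_and_ae_bdd_of_le_integral_mul_sub hgm hf hfB hK
    (by simpa only [hnorm] using hle)
  exact ⟨hint, C, by simpa only [hnorm] using hC⟩

theorem stmt13 (u H : ℝ → ℝ) (M a ν r : ℝ) (hM : 0 < M) (ha : 0 < a) (hr : 1 < r)
    (hu1 : MeasureTheory.Integrable u) (huB : ∃ B, ∀ x, |u x| ≤ B)
    (hH : MeasureTheory.Integrable (fun x => Real.exp (a * |x|) * |H x|))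
    (hineq : ∀ᵐ x : ℝ ∂MeasureTheory.volume,
      |u x| ≤ M * ∫ y : ℝ, |H (x - y)| * |u y| ^ r)
    (hν : 0 < ν) (hrν : r * ν ≤ a)
    (huν1 : MeasureTheory.Integrable (fun x => Real.exp (ν * |x|) * u x))
    (huνB : ∃ B, ∀ x, Real.exp (ν * |x|) * |u x| ≤ B) :
    MeasureTheory.Integrable (fun x => Real.exp (r * ν * |x|) * u x) ∧
    ∃ B, ∀ᵐ x : ℝ ∂MeasureTheory.volume, Real.exp (r * ν * |x|) * |u x| ≤ B :=
  stmt13_general u H M a ν r hM hr hu1 hH hineq hν hrν huν1 huνB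
end

section
/- Suppose |u(x)| ≤ M (|H| * |G∘u|)(x) for a.e. x, where e^{δ_c|·|}H(·) = f with f ∈ L¹_loc(ℝ), f bounded on {|x| ≥ 1}, and |G(u(y))| ≤ B e^{−δ_c |y|}·|u(y)| with e^{(δ_c/r)|·|}u ∈ L¹ ∩ L^∞ for some r > 1. Then e^{δ_c|·|} u ∈ L^∞(ℝ), i.e., sup_x e^{δ_c|x|}|u(x)| < ∞. -/
open MeasureTheory Real

theorem stmt19 (u H f G : ℝ → ℝ) (M B δc r : ℝ) (hM : 0 < M) (hB : 0 < B)
    (hδc : 0 < δc) (hr : 1 < r)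
    (hHf : ∀ x : ℝ, H x = Real.exp (-δc * |x|) * f x)
    (hfloc : MeasureTheory.LocallyIntegrable f MeasureTheory.volume)
    (hfbd : ∃ A, ∀ x : ℝ, 1 ≤ |x| → |f x| ≤ A)
    (hGu : ∀ y : ℝ, |G (u y)| ≤
      B * (|u y| * Real.exp (δc / r * |y|)) ^ r * Real.exp (-δc * |y|))
    (hu1 : MeasureTheory.Integrable (fun y => Real.exp (δc / r * |y|) * u y))
    (huB : ∃ A, ∀ y : ℝ, Real.exp (δc / r * |y|) * |u y| ≤ A)
    (hineq : ∀ᵐ x : ℝ ∂MeasureTheory.volume,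
      |u x| ≤ M * ∫ y : ℝ, |H (x - y)| * |G (u y)|) :
    ∃ S : ℝ, ∀ᵐ x : ℝ ∂MeasureTheory.volume, Real.exp (δc * |x|) * |u x| ≤ S := by
  obtain ⟨Af, hAf⟩ := hfbd
  obtain ⟨Au, hAu⟩ := huB
  have hAf0 : 0 ≤ Af := le_trans (abs_nonneg _) (hAf 1 (by norm_num))
  have hAu0 : 0 ≤ Au := le_trans (by positivity) (hAu 0)
  set g : ℝ → ℝ := fun y => Real.exp (δc / r * |y|) * |u y| with hgdef
  have hg_nonneg : ∀ y, 0 ≤ g y := fun y => by positivity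
  have hg_int : Integrable g := by
    have h := hu1.abs
    refine h.congr (Filter.Eventually.of_forall fun y => ?_)
    simp [hgdef, abs_mul, abs_of_pos (Real.exp_pos _)]
  set F : ℝ → ℝ := fun z => Set.indicator (Set.Icc (-1:ℝ) 1) (fun z => |f z|) z with hFdef
  have hF_int : Integrable F := by
    rw [MeasureTheory.integrable_indicator_iff measurableSet_Icc]
    exact (hfloc.integrableOn_isCompact isCompact_Icc).abs
  set K : ℝ := Au * (∫ z, F z) + Af * (∫ y, g y) with hKdef
  refine ⟨M * (B * Au ^ (r - 1)) * K, ?_⟩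
  filter_upwards [hineq] with x hx
  set ψ : ℝ → ℝ := fun y => Au * F (x - y) + Af * g y with hψdef
  have hψ_int : Integrable ψ :=
    ((hF_int.comp_sub_left x).const_mul Au).add (hg_int.const_mul Af)
  have hψ_integral : (∫ y, ψ y) = K := by
    rw [hψdef]
    rw [integral_add ((hF_int.comp_sub_left x).const_mul Au) (hg_int.const_mul Af),
      integral_const_mul, integral_const_mul,
      integral_sub_left_eq_self (fun z => F z) volume x]
  have hmaj : ∀ y, |H (x - y)| * |G (u y)| ≤
      (B * Au ^ (r - 1)) * Real.exp (-(δc * |x|)) * ψ y := by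
    intro y
    have h1 : |H (x - y)| = Real.exp (-δc * |x - y|) * |f (x - y)| := by
      rw [hHf]; rw [abs_mul, abs_of_pos (Real.exp_pos _)]
    have h2 : |G (u y)| ≤ B * g y ^ r * Real.exp (-δc * |y|) := by
      have := hGu y
      rwa [mul_comm |u y| (Real.exp (δc / r * |y|))] at this
    have h3 : g y ^ r ≤ Au ^ (r - 1) * g y := by
      rcases eq_or_lt_of_le (hg_nonneg y) with h0 | h0
      · rw [← h0, Real.zero_rpow (by positivity), mul_zero]
      · have : g y ^ r = g y ^ (r - 1) * g y := by
          rw [← Real.rpow_add_one (ne_of_gt h0)]; ring_nf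
        rw [this]
        have h30 : (0:ℝ) ≤ r - 1 := by linarith
        have := Real.rpow_le_rpow (hg_nonneg y) (hAu y) h30
        exact mul_le_mul_of_nonneg_right this (hg_nonneg y)
    have h4 : Real.exp (-δc * |x - y|) * Real.exp (-δc * |y|) ≤
        Real.exp (-(δc * |x|)) := by
      rw [← Real.exp_add]
      apply Real.exp_le_exp.mpr
      have habs : |x| ≤ |x - y| + |y| := by
        calc |x| = |(x - y) + y| := by ring_nf
          _ ≤ |x - y| + |y| := abs_add_le _ _
      have := mul_le_mul_of_nonneg_left habs hδc.le
      linarith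
    have h5 : |f (x - y)| * g y ≤ ψ y := by
      by_cases hc : x - y ∈ Set.Icc (-1:ℝ) 1
      · have hFeq : F (x - y) = |f (x - y)| := Set.indicator_of_mem hc _
        have : |f (x - y)| * g y ≤ Au * F (x - y) := by
          rw [hFeq, mul_comm Au]
          exact mul_le_mul_of_nonneg_left (hAu y) (abs_nonneg _)
        have h6 : 0 ≤ Af * g y := mul_nonneg hAf0 (hg_nonneg y)
        simp only [hψdef]; linarith
      · have h1le : 1 ≤ |x - y| := by
          simp only [Set.mem_Icc, not_and_or, not_le] at hc
          rcases hc with hc | hc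
          · rw [abs_sub_comm]; calc 1 ≤ -(x - y) := by linarith
              _ ≤ |y - x| := by rw [abs_sub_comm]; exact neg_le_abs _
          · calc 1 ≤ x - y := by linarith
              _ ≤ |x - y| := le_abs_self _
        have : |f (x - y)| * g y ≤ Af * g y :=
          mul_le_mul_of_nonneg_right (hAf (x - y) h1le) (hg_nonneg y)
        have h6 : 0 ≤ Au * F (x - y) :=
          mul_nonneg hAu0 (Set.indicator_nonneg (fun z _ => abs_nonneg _) _)
        simp only [hψdef]; linarith
    calc |H (x - y)| * |G (u y)|
        ≤ (Real.exp (-δc * |x - y|) * |f (x - y)|) *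
            (B * g y ^ r * Real.exp (-δc * |y|)) := by
          rw [h1]; exact mul_le_mul_of_nonneg_left h2 (by positivity)
      _ = B * g y ^ r * (Real.exp (-δc * |x - y|) * Real.exp (-δc * |y|)) *
            |f (x - y)| := by ring
      _ ≤ B * (Au ^ (r - 1) * g y) * (Real.exp (-δc * |x - y|) *
            Real.exp (-δc * |y|)) * |f (x - y)| := by
          gcongr
      _ ≤ B * (Au ^ (r - 1) * g y) * Real.exp (-(δc * |x|)) * |f (x - y)| := by
          have hnn : 0 ≤ B * (Au ^ (r - 1) * g y) := by positivity
          gcongr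
      _ = (B * Au ^ (r - 1)) * Real.exp (-(δc * |x|)) * (|f (x - y)| * g y) := by
          ring
      _ ≤ (B * Au ^ (r - 1)) * Real.exp (-(δc * |x|)) * ψ y := by
          gcongr
  have hI : (∫ y, |H (x - y)| * |G (u y)|) ≤
      (B * Au ^ (r - 1)) * Real.exp (-(δc * |x|)) * K := by
    calc (∫ y, |H (x - y)| * |G (u y)|)
        ≤ ∫ y, (B * Au ^ (r - 1)) * Real.exp (-(δc * |x|)) * ψ y :=
          integral_mono_of_nonneg
            (Filter.Eventually.of_forall fun y =>
              mul_nonneg (abs_nonneg _) (abs_nonneg _))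
            (hψ_int.const_mul _)
            (Filter.Eventually.of_forall hmaj)
      _ = (B * Au ^ (r - 1)) * Real.exp (-(δc * |x|)) * ∫ y, ψ y := by
          rw [integral_const_mul]
      _ = (B * Au ^ (r - 1)) * Real.exp (-(δc * |x|)) * K := by
          rw [hψ_integral]
  calc Real.exp (δc * |x|) * |u x|
      ≤ Real.exp (δc * |x|) *
          (M * ((B * Au ^ (r - 1)) * Real.exp (-(δc * |x|)) * K)) := by
        have := le_trans hx (mul_le_mul_of_nonneg_left hI hM.le)
        exact mul_le_mul_of_nonneg_left this (Real.exp_nonneg _)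
    _ = M * (B * Au ^ (r - 1)) * K *
          (Real.exp (δc * |x|) * Real.exp (-(δc * |x|))) := by ring
    _ = M * (B * Au ^ (r - 1)) * K := by
        rw [← Real.exp_add, add_neg_cancel, Real.exp_zero, mul_one]
end
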